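/- arXiv:2011.12478 — 6 statements merged into one kernel-verified Lean document; each statement's English description precedes it below -/
import Mathlib

section
/- Let M, M' ⊆ ℝ^d be nonempty sets and let 0 < h < r. Suppose: (i) every point of M is within distance h of M' and every point of M' is within distance h of M; (ii) there exist maps P : N → M and P' : N' → M', where N (resp. N') is the closed h-neighborhood of M (resp. M'), such that P and P' are r/(r−h)-Lipschitz and restrict to the identity on M and on M', respectively. Then for all x, x' ∈ M ∩ M': d_{M'}(x,x') ≤ (r/(r−h))·d_M(x,x') and d_M(x,x') ≤ (r/(r−h))·d_{M'}(x,x'), and consequently |d_M(x,x') − d_{M'}(x,x')| ≤ (h/(r−h))·min{d_M(x,x'), d_{M'}(x,x')} whenever these distances are finite. -/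
open Set
open scoped ENNReal NNReal

/-! Since `M` lies in the `h`-neighbourhood of `M'`, the retraction `P'` maps a curve in `M`
joining two points of `M ∩ M'` (which `P'` fixes) to a curve in `M'` with the same endpoints and
at most `r/(r-h)` times as long; symmetrically for `P`. With `r/(r-h) = 1 + t`, `t = h/(r-h)`,
the two bounds `b ≤ (1 + t) a` and `a ≤ (1 + t) b` give `|a - b| ≤ t min a b`. -/

/-- The intrinsic distance on a set `A`: the infimum of the lengths (total variations) of
continuous curves `γ : [0,1] → A` joining the two points, in `[0,∞]`. -/
noncomputable def intrinsicDist {E : Type*} [PseudoEMetricSpace E] (A : Set E) (x x' : E) :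
    ℝ≥0∞ :=
  sInf {L | ∃ γ : ℝ → E, ContinuousOn γ (Icc 0 1) ∧ MapsTo γ (Icc 0 1) A ∧
    γ 0 = x ∧ γ 1 = x' ∧ L = eVariationOn γ (Icc 0 1)}

section IntrinsicDist

variable {E : Type*} [PseudoEMetricSpace E]

lemma intrinsicDist_le_eVariationOn {A : Set E} {γ : ℝ → E} (hγ : ContinuousOn γ (Icc 0 1))
    (hγA : MapsTo γ (Icc 0 1) A) :
    intrinsicDist A (γ 0) (γ 1) ≤ eVariationOn γ (Icc 0 1) :=
  sInf_le ⟨γ, hγ, hγA, rfl, rfl, rfl⟩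

lemma intrinsicDist_le_mul_of_lipschitzOnWith {A B S : Set E} {f : E → E} {K : ℝ≥0}
    (hK : K ≠ 0) (hf : LipschitzOnWith K f S) (hAS : A ⊆ S) (hfAB : MapsTo f A B)
    {x x' : E} (hx : f x = x) (hx' : f x' = x') :
    intrinsicDist B x x' ≤ K * intrinsicDist A x x' := by
  have hK' : (K : ℝ≥0∞) ≠ 0 := by exact_mod_cast hK
  rw [← ENNReal.div_le_iff' hK' ENNReal.coe_ne_top]
  refine le_sInf ?_
  rintro _ ⟨γ, hγ, hγA, rfl, rfl, rfl⟩
  rw [ENNReal.div_le_iff' hK' ENNReal.coe_ne_top]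
  have hγS : MapsTo γ (Icc 0 1) S := hγA.mono_right hAS
  calc intrinsicDist B (γ 0) (γ 1) = intrinsicDist B ((f ∘ γ) 0) ((f ∘ γ) 1) := by
        rw [Function.comp_apply, Function.comp_apply, hx, hx']
    _ ≤ eVariationOn (f ∘ γ) (Icc 0 1) :=
        intrinsicDist_le_eVariationOn (hf.continuousOn.comp hγ hγS) (hfAB.comp hγA)
    _ ≤ K * eVariationOn γ (Icc 0 1) := hf.comp_eVariationOn_le hγS

end IntrinsicDist

lemma abs_sub_le_mul_min_of_le_one_add_mul {α : Type*} [Field α] [LinearOrder α]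
    [IsStrictOrderedRing α] {a b t : α} (hba : b ≤ (1 + t) * a) (hab : a ≤ (1 + t) * b) :
    |a - b| ≤ t * min a b := by
  rcases le_total a b with h | h
  · rw [min_eq_left h, abs_of_nonpos (sub_nonpos.2 h)]
    linarith
  · rw [min_eq_right h, abs_of_nonneg (sub_nonneg.2 h)]
    linarith

theorem intrinsicDist_both_projections_general {d : ℕ}
    (M M' : Set (EuclideanSpace ℝ (Fin d)))
    (h r : ℝ) (hh : 0 < h) (hhr : h < r)
    (hMM' : ∀ x ∈ M, Metric.infDist x M' ≤ h)
    (hM'M : ∀ x ∈ M', Metric.infDist x M ≤ h)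
    (P P' : EuclideanSpace ℝ (Fin d) → EuclideanSpace ℝ (Fin d))
    (hPmaps : MapsTo P {z | Metric.infDist z M ≤ h} M)
    (hPlip : ∀ x ∈ {z | Metric.infDist z M ≤ h}, ∀ y ∈ {z | Metric.infDist z M ≤ h},
      dist (P x) (P y) ≤ r / (r - h) * dist x y)
    (hPid : EqOn P id M)
    (hP'maps : MapsTo P' {z | Metric.infDist z M' ≤ h} M')
    (hP'lip : ∀ x ∈ {z | Metric.infDist z M' ≤ h}, ∀ y ∈ {z | Metric.infDist z M' ≤ h},
      dist (P' x) (P' y) ≤ r / (r - h) * dist x y)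
    (hP'id : EqOn P' id M') :
    ∀ x ∈ M ∩ M', ∀ x' ∈ M ∩ M',
      intrinsicDist M' x x' ≤ ENNReal.ofReal (r / (r - h)) * intrinsicDist M x x' ∧
      intrinsicDist M x x' ≤ ENNReal.ofReal (r / (r - h)) * intrinsicDist M' x x' ∧
      (intrinsicDist M x x' ≠ ⊤ → intrinsicDist M' x x' ≠ ⊤ →
        |(intrinsicDist M x x').toReal - (intrinsicDist M' x x').toReal|
          ≤ h / (r - h) * min (intrinsicDist M x x').toReal (intrinsicDist M' x x').toReal) := by
  have hrh : 0 < r - h := sub_pos.2 hhr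
  have hC : 0 < r / (r - h) := div_pos (hh.trans hhr) hrh
  have hK : (r / (r - h)).toNNReal ≠ 0 := (Real.toNNReal_pos.2 hC).ne'
  intro x hx x' hx'
  have hM'_le : intrinsicDist M' x x' ≤ ENNReal.ofReal (r / (r - h)) * intrinsicDist M x x' :=
    intrinsicDist_le_mul_of_lipschitzOnWith hK (.of_dist_le' hP'lip) hMM'
      (fun z hz => hP'maps (hMM' z hz)) (hP'id hx.2) (hP'id hx'.2)
  have hM_le : intrinsicDist M x x' ≤ ENNReal.ofReal (r / (r - h)) * intrinsicDist M' x x' :=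
    intrinsicDist_le_mul_of_lipschitzOnWith hK (.of_dist_le' hPlip) hM'M
      (fun z hz => hPmaps (hM'M z hz)) (hPid hx.1) (hPid hx'.1)
  have toReal_le {a b : ℝ≥0∞} (hab : a ≤ ENNReal.ofReal (r / (r - h)) * b) (hb : b ≠ ⊤) :
      a.toReal ≤ (1 + h / (r - h)) * b.toReal := by
    rw [one_add_div hrh.ne', sub_add_cancel, ← ENNReal.toReal_ofReal hC.le, ← ENNReal.toReal_mul]
    exact ENNReal.toReal_mono (ENNReal.mul_ne_top ENNReal.ofReal_ne_top hb) hab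
  exact ⟨hM'_le, hM_le, fun hfin hfin' =>
    abs_sub_le_mul_min_of_le_one_add_mul (toReal_le hM'_le hfin) (toReal_le hM_le hfin')⟩

/-- If `M, M'` are nonempty, within Hausdorff distance `h < r` of each other,
and admit `r/(r−h)`-Lipschitz retractions `P, P'` of their closed `h`-neighborhoods onto them,
then the intrinsic distances of points of `M ∩ M'` agree up to a factor `r/(r−h)`, and hence
`|d_M − d_{M'}| ≤ (h/(r−h))·min{d_M, d_{M'}}` when these are finite. -/
theorem intrinsicDist_both_projections {d : ℕ}
    (M M' : Set (EuclideanSpace ℝ (Fin d))) (hM : M.Nonempty) (hM' : M'.Nonempty)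
    (h r : ℝ) (hh : 0 < h) (hhr : h < r)
    (hMM' : ∀ x ∈ M, Metric.infDist x M' ≤ h)
    (hM'M : ∀ x ∈ M', Metric.infDist x M ≤ h)
    (P P' : EuclideanSpace ℝ (Fin d) → EuclideanSpace ℝ (Fin d))
    (hPmaps : MapsTo P {z | Metric.infDist z M ≤ h} M)
    (hPlip : ∀ x ∈ {z | Metric.infDist z M ≤ h}, ∀ y ∈ {z | Metric.infDist z M ≤ h},
      dist (P x) (P y) ≤ r / (r - h) * dist x y)
    (hPid : EqOn P id M)
    (hP'maps : MapsTo P' {z | Metric.infDist z M' ≤ h} M')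
    (hP'lip : ∀ x ∈ {z | Metric.infDist z M' ≤ h}, ∀ y ∈ {z | Metric.infDist z M' ≤ h},
      dist (P' x) (P' y) ≤ r / (r - h) * dist x y)
    (hP'id : EqOn P' id M') :
    ∀ x ∈ M ∩ M', ∀ x' ∈ M ∩ M',
      intrinsicDist M' x x' ≤ ENNReal.ofReal (r / (r - h)) * intrinsicDist M x x' ∧
      intrinsicDist M x x' ≤ ENNReal.ofReal (r / (r - h)) * intrinsicDist M' x x' ∧
      (intrinsicDist M x x' ≠ ⊤ → intrinsicDist M' x x' ≠ ⊤ →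
        |(intrinsicDist M x x').toReal - (intrinsicDist M' x x').toReal|
          ≤ h / (r - h) * min (intrinsicDist M x x').toReal (intrinsicDist M' x x').toReal) :=
  intrinsicDist_both_projections_general M M' h r hh hhr hMM' hM'M P P' hPmaps hPlip hPid hP'maps
    hP'lip hP'id
end

section
/- Let T and T' be affine subspaces of ℝ^d with direction (linear) subspaces U and V respectively, and suppose T ∩ T' ≠ ∅. Then for every x ∈ ℝ^d, |dist(x,T) − dist(x,T')| ≤ ‖P_U − P_V‖ · dist(x, T ∩ T'), where P_U and P_V denote the orthogonal projections of ℝ^d onto U and V and ‖·‖ is the operator norm. -/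
/-!
For a common point `z` of `T` and `T'`, the distance from `x` to `T` is `‖(I - P_U)(x - z)‖` and
likewise for `T'`, so by the reverse triangle inequality the two distances differ by at most
`‖(P_U - P_V)(x - z)‖ ≤ ‖P_U - P_V‖ · dist(x, z)`; it remains to minimize over `z ∈ T ∩ T'`.
-/

theorem Metric.le_mul_infDist_of_forall_le_mul_dist {X : Type*} [PseudoMetricSpace X]
    {s : Set X} (hs : s.Nonempty) {a c : ℝ} (hc : 0 ≤ c) {x : X}
    (h : ∀ y ∈ s, a ≤ c * dist x y) : a ≤ c * Metric.infDist x s := by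
  have : Nonempty s := hs.to_subtype
  rw [Metric.infDist_eq_iInf, Real.mul_iInf_of_nonneg hc]
  exact le_ciInf fun y ↦ h y y.2

section AffineSubspace

variable {𝕜 V P : Type*} [RCLike 𝕜] [NormedAddCommGroup V] [InnerProductSpace 𝕜 V]
  [MetricSpace P] [NormedAddTorsor V P]

theorem AffineSubspace.infDist_eq_norm_vsub_sub_starProjection {s : AffineSubspace 𝕜 P}
    [s.direction.HasOrthogonalProjection] {p₀ : P} (hp₀ : p₀ ∈ s) (p : P) :
    Metric.infDist p s = ‖(p -ᵥ p₀) - s.direction.starProjection (p -ᵥ p₀)‖ := by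
  have : Nonempty s := ⟨⟨p₀, hp₀⟩⟩
  rw [← EuclideanGeometry.dist_orthogonalProjection_eq_infDist,
    EuclideanGeometry.orthogonalProjection_apply_mem s hp₀, dist_eq_norm_vsub V,
    vsub_vadd_eq_vsub_sub, Submodule.coe_orthogonalProjectionOnto_apply]

theorem AffineSubspace.abs_infDist_sub_infDist_le {s t : AffineSubspace 𝕜 P}
    [s.direction.HasOrthogonalProjection] [t.direction.HasOrthogonalProjection]
    {p₀ : P} (hs : p₀ ∈ s) (ht : p₀ ∈ t) (p : P) :
    |Metric.infDist p s - Metric.infDist p t| ≤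
      ‖s.direction.starProjection - t.direction.starProjection‖ * dist p p₀ := by
  rw [s.infDist_eq_norm_vsub_sub_starProjection hs, t.infDist_eq_norm_vsub_sub_starProjection ht,
    dist_eq_norm_vsub V]
  set v := p -ᵥ p₀
  calc |‖v - s.direction.starProjection v‖ - ‖v - t.direction.starProjection v‖|
      ≤ ‖(v - s.direction.starProjection v) - (v - t.direction.starProjection v)‖ :=
        abs_norm_sub_norm_le _ _
    _ = ‖(s.direction.starProjection - t.direction.starProjection) v‖ := by
        rw [sub_sub_sub_cancel_left, ← norm_neg, neg_sub, sub_apply]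
    _ ≤ _ := ContinuousLinearMap.le_opNorm _ _

end AffineSubspace

/-- For affine subspaces `T, T'` of `ℝ^d` with directions `U, V` and
`T ∩ T' ≠ ∅`, for every `x`:
`|dist(x,T) − dist(x,T')| ≤ ‖P_U − P_V‖ · dist(x, T ∩ T')`,
where `P_U, P_V` are the orthogonal projections onto `U, V` (as maps `ℝ^d → ℝ^d`). -/
theorem infDist_affine_sub_le {d : ℕ}
    (T T' : AffineSubspace ℝ (EuclideanSpace ℝ (Fin d)))
    (hTT' : ((T : Set (EuclideanSpace ℝ (Fin d))) ∩
      (T' : Set (EuclideanSpace ℝ (Fin d)))).Nonempty)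
    (x : EuclideanSpace ℝ (Fin d)) :
    |Metric.infDist x (T : Set (EuclideanSpace ℝ (Fin d))) -
        Metric.infDist x (T' : Set (EuclideanSpace ℝ (Fin d)))| ≤
      ‖(T.direction.subtypeL.comp (Submodule.orthogonalProjectionOnto T.direction)) -
        (T'.direction.subtypeL.comp (Submodule.orthogonalProjectionOnto T'.direction))‖ *
      Metric.infDist x ((T : Set (EuclideanSpace ℝ (Fin d))) ∩
        (T' : Set (EuclideanSpace ℝ (Fin d)))) :=
  Metric.le_mul_infDist_of_forall_le_mul_dist hTT' (norm_nonneg _) fun _ hz ↦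
    T.abs_infDist_sub_infDist_le hz.1 hz.2 x
end

section
/- There exist η₀ > 0 depending only on k, and C₂ ≥ 1 depending only on k and C₁, such that the following holds. If 0 < η ≤ η₀ and u₁, …, u_N ∈ B̄ form an (η, 1/C₁)-net of B̄, then the matrix Σ := (1/N) Σ_{j=1}^N u_j u_jᵀ satisfies ‖v‖²/C₂ ≤ ⟨Σ v, v⟩ ≤ C₂‖v‖² for every v ∈ ℝ^k; that is, (1/C₂)·I ≼ Σ ≼ C₂·I in the Loewner order. -/
/-!
The upper bound is Cauchy–Schwarz, as every `u j` lies in the unit ball. For the lower bound fix a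
unit vector `w`. Volume comparison gives two counts: the `η / C₁`-separated points are at most
`(6 C₁ / η)^k` in number (disjoint balls of radius `η / (3 C₁)` inside the ball of radius `2`),
while the ball of radius `1/4` around `(3/4) w` is covered by the `η`-balls around points with
`⟪u j, w⟫ ≥ 1/4`, so there are at least `(1 / (4 η))^k` of those. Hence a fraction at least
`(24 C₁)^{-k}` of the points has `⟪u j, w⟫² ≥ 1/16`.
-/

open Set Finset MeasureTheory Metric Module

theorem card_filter_le_mul_sq_le_sum_sq {ι : Type*} (s : Finset ι) (f : ι → ℝ) {a : ℝ}
    (ha : 0 ≤ a) :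
    #{j ∈ s | a ≤ f j} * a ^ 2 ≤ ∑ j ∈ s, f j ^ 2 :=
  calc #{j ∈ s | a ≤ f j} * a ^ 2 = ∑ _j ∈ s with a ≤ f _j, a ^ 2 := by
        rw [sum_const, nsmul_eq_mul]
    _ ≤ ∑ j ∈ s with a ≤ f j, f j ^ 2 :=
        sum_le_sum fun j hj => pow_le_pow_left₀ ha (mem_filter.1 hj).2 2
    _ ≤ ∑ j ∈ s, f j ^ 2 := sum_le_sum_of_subset_of_nonneg (filter_subset _ _)
        fun j _ _ => sq_nonneg _

section Volume

variable {E : Type*} [NormedAddCommGroup E] [NormedSpace ℝ E] [FiniteDimensional ℝ E]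

theorem card_mul_pow_le_of_pairwise_lt_dist {ι : Type*} [Fintype ι] {u : ι → E} {x : E}
    {R r : ℝ} (hR : 0 ≤ R) (hr : 0 ≤ r) (hu : ∀ j, u j ∈ closedBall x R)
    (hsep : Pairwise fun j l => 2 * r < dist (u j) (u l)) :
    Fintype.card ι * r ^ finrank ℝ E ≤ (R + r) ^ finrank ℝ E := by
  borelize E
  let μ : Measure E := Measure.addHaar
  have hdisj : ((univ : Finset ι) : Set ι).PairwiseDisjoint fun j => closedBall (u j) r :=
    fun j _ l _ hjl => closedBall_disjoint_closedBall (by linarith [hsep hjl, hr])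
  have hsub : ⋃ j ∈ (univ : Finset ι), closedBall (u j) r ⊆ closedBall x (R + r) :=
    iUnion₂_subset fun j _ =>
      closedBall_subset_closedBall' (by linarith [mem_closedBall.1 (hu j)])
  have hvol := calc
    Fintype.card ι * r ^ finrank ℝ E * μ.real (closedBall 0 1)
        = μ.real (⋃ j ∈ (univ : Finset ι), closedBall (u j) r) := by
          rw [measureReal_biUnion_finset hdisj (fun j _ => measurableSet_closedBall)
            fun j _ => measure_closedBall_lt_top.ne]
          simp [μ.addHaar_real_closedBall' _ hr, mul_assoc]
    _ ≤ μ.real (closedBall x (R + r)) := measureReal_mono hsub measure_closedBall_lt_top.ne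
    _ = (R + r) ^ finrank ℝ E * μ.real (closedBall 0 1) :=
      μ.addHaar_real_closedBall' _ (by positivity)
  exact le_of_mul_le_mul_right hvol
    (ENNReal.toReal_pos (measure_closedBall_pos μ _ one_pos).ne' measure_closedBall_lt_top.ne)

theorem pow_le_card_mul_pow_of_closedBall_subset_biUnion {ι : Type*} {s : Finset ι} {u : ι → E}
    {x : E} {R r : ℝ} (hR : 0 ≤ R) (hr : 0 ≤ r)
    (hcover : closedBall x R ⊆ ⋃ j ∈ s, closedBall (u j) r) :
    R ^ finrank ℝ E ≤ #s * r ^ finrank ℝ E := by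
  borelize E
  let μ : Measure E := Measure.addHaar
  have hvol := calc
    R ^ finrank ℝ E * μ.real (closedBall 0 1) = μ.real (closedBall x R) :=
      (μ.addHaar_real_closedBall' _ hR).symm
    _ ≤ μ.real (⋃ j ∈ s, closedBall (u j) r) := measureReal_mono hcover
      (measure_biUnion_lt_top s.finite_toSet fun j _ => measure_closedBall_lt_top).ne
    _ ≤ ∑ j ∈ s, μ.real (closedBall (u j) r) := measureReal_biUnion_finset_le _ _
    _ = #s * r ^ finrank ℝ E * μ.real (closedBall 0 1) := by
      simp [μ.addHaar_real_closedBall' _ hr, mul_assoc]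
  exact le_of_mul_le_mul_right hvol
    (ENNReal.toReal_pos (measure_closedBall_pos μ _ one_pos).ne' measure_closedBall_lt_top.ne)

theorem card_mul_pow_le_of_separated_of_mem_closedBall_one {ι : Type*} [Fintype ι] {u : ι → E}
    {η C₁ : ℝ} (hub : ∀ j, u j ∈ closedBall (0 : E) 1)
    (hsep : ∀ j l, j ≠ l → η / C₁ ≤ ‖u j - u l‖) (hη : 0 < η) (hη₁ : η ≤ 1) (hC₁ : 1 ≤ C₁) :
    Fintype.card ι * η ^ finrank ℝ E ≤ (6 * C₁) ^ finrank ℝ E := by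
  set r := η / (3 * C₁) with hr
  have hr₁ : r ≤ 1 := by rw [hr, div_le_one (by positivity)]; linarith
  have hpack := card_mul_pow_le_of_pairwise_lt_dist (x := 0) (r := r) zero_le_one
    (by positivity) hub fun j l hjl => by
      show 2 * r < dist (u j) (u l)
      rw [dist_eq_norm]
      refine lt_of_lt_of_le ?_ (hsep j l hjl)
      rw [hr, mul_div_assoc', div_lt_div_iff₀ (by positivity) (by positivity)]
      nlinarith
  calc Fintype.card ι * η ^ finrank ℝ E
      = Fintype.card ι * r ^ finrank ℝ E * (3 * C₁) ^ finrank ℝ E := by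
        rw [mul_assoc, ← mul_pow, hr, div_mul_cancel₀ _ (by positivity)]
    _ ≤ 2 ^ finrank ℝ E * (3 * C₁) ^ finrank ℝ E := by
        gcongr
        exact hpack.trans (by gcongr; linarith)
    _ = (6 * C₁) ^ finrank ℝ E := by rw [← mul_pow, ← mul_assoc]; norm_num

end Volume

section Net

open scoped RealInnerProductSpace

variable {E : Type*} [NormedAddCommGroup E] [InnerProductSpace ℝ E]
  {ι : Type*} [Fintype ι] {u : ι → E} {η C₁ : ℝ}

theorem closedBall_subset_biUnion_filter_le_inner
    (hcov : ∀ y ∈ closedBall (0 : E) 1, ∃ j, ‖y - u j‖ ≤ η) (hη : η ≤ 1 / 4) {w : E}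
    (hw : ‖w‖ = 1) :
    closedBall ((3 / 4 : ℝ) • w) (1 / 4) ⊆
      ⋃ j ∈ ({j | 1 / 4 ≤ ⟪u j, w⟫} : Finset ι), closedBall (u j) η := by
  intro y hy
  have hy₁ : y ∈ closedBall (0 : E) 1 :=
    closedBall_subset_closedBall' (by simp [norm_smul, hw]; norm_num) hy
  obtain ⟨j, hj⟩ := hcov y hy₁
  have hcenter : ⟪(3 / 4 : ℝ) • w, w⟫ = 3 / 4 := by
    rw [real_inner_smul_left, real_inner_self_eq_norm_sq, hw]; norm_num
  have hdist : ‖(3 / 4 : ℝ) • w - u j‖ ≤ 1 / 4 + η := by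
    rw [mem_closedBall, dist_eq_norm, norm_sub_rev] at hy
    exact (norm_sub_le_norm_sub_add_norm_sub _ y _).trans (add_le_add hy hj)
  have hinner : ⟪(3 / 4 : ℝ) • w - u j, w⟫ ≤ 1 / 4 + η :=
    (real_inner_le_norm _ _).trans (by rwa [hw, mul_one])
  rw [inner_sub_left, hcenter] at hinner
  exact mem_biUnion (mem_filter.2 ⟨mem_univ j, by linarith⟩)
    (by rwa [mem_closedBall, dist_eq_norm])

theorem sum_inner_sq_le_card_mul_sq_norm (hu : ∀ j, ‖u j‖ ≤ 1) (v : E) :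
    ∑ j, ⟪u j, v⟫ ^ 2 ≤ Fintype.card ι * ‖v‖ ^ 2 := by
  rw [← nsmul_eq_mul]
  refine sum_le_card_nsmul _ _ _ fun j _ => ?_
  rw [← sq_abs]
  gcongr
  exact (abs_real_inner_le_norm _ _).trans (mul_le_of_le_one_left (norm_nonneg v) (hu j))

variable [FiniteDimensional ℝ E]

theorem card_le_mul_sum_inner_sq_of_norm_eq_one (hub : ∀ j, u j ∈ closedBall (0 : E) 1)
    (hcov : ∀ y ∈ closedBall (0 : E) 1, ∃ j, ‖y - u j‖ ≤ η)
    (hsep : ∀ j l, j ≠ l → η / C₁ ≤ ‖u j - u l‖) (hη : 0 < η) (hη₀ : η ≤ 1 / 4) (hC₁ : 1 ≤ C₁)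
    {w : E} (hw : ‖w‖ = 1) :
    (Fintype.card ι : ℝ) ≤ 16 * (24 * C₁) ^ finrank ℝ E * ∑ j, ⟪u j, w⟫ ^ 2 := by
  set d := finrank ℝ E
  set S : Finset ι := {j | 1 / 4 ≤ ⟪u j, w⟫}
  have hpack : Fintype.card ι * η ^ d ≤ (6 * C₁) ^ d :=
    card_mul_pow_le_of_separated_of_mem_closedBall_one hub hsep hη (by linarith) hC₁
  have hcap : (1 / 4 : ℝ) ^ d ≤ #S * η ^ d :=
    pow_le_card_mul_pow_of_closedBall_subset_biUnion (by norm_num) hη.le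
      (closedBall_subset_biUnion_filter_le_inner hcov hη₀ hw)
  have hS : #S * (1 / 4 : ℝ) ^ 2 ≤ ∑ j, ⟪u j, w⟫ ^ 2 :=
    card_filter_le_mul_sq_le_sum_sq univ _ (by norm_num)
  have hcard : (Fintype.card ι : ℝ) * (1 / 4) ^ d ≤ #S * (6 * C₁) ^ d :=
    calc (Fintype.card ι : ℝ) * (1 / 4) ^ d ≤ Fintype.card ι * (#S * η ^ d) := by gcongr
      _ = #S * (Fintype.card ι * η ^ d) := by ring
      _ ≤ #S * (6 * C₁) ^ d := by gcongr
  calc (Fintype.card ι : ℝ) = Fintype.card ι * (1 / 4) ^ d * 4 ^ d := by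
        rw [mul_assoc, ← mul_pow]; norm_num
    _ ≤ #S * (6 * C₁) ^ d * 4 ^ d := by gcongr
    _ = 16 * (24 * C₁) ^ d * (#S * (1 / 4) ^ 2) := by
        rw [show (24 : ℝ) * C₁ = 4 * (6 * C₁) by ring, mul_pow 4]; ring
    _ ≤ 16 * (24 * C₁) ^ d * ∑ j, ⟪u j, w⟫ ^ 2 := by gcongr

theorem card_mul_sq_norm_le_mul_sum_inner_sq (hub : ∀ j, u j ∈ closedBall (0 : E) 1)
    (hcov : ∀ y ∈ closedBall (0 : E) 1, ∃ j, ‖y - u j‖ ≤ η)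
    (hsep : ∀ j l, j ≠ l → η / C₁ ≤ ‖u j - u l‖) (hη : 0 < η) (hη₀ : η ≤ 1 / 4) (hC₁ : 1 ≤ C₁)
    (v : E) :
    Fintype.card ι * ‖v‖ ^ 2 ≤ 16 * (24 * C₁) ^ finrank ℝ E * ∑ j, ⟪u j, v⟫ ^ 2 := by
  rcases eq_or_ne v 0 with rfl | hv
  · simp
  have hw : ‖‖v‖⁻¹ • v‖ = 1 := norm_smul_inv_norm hv
  have hsum : ∑ j, ⟪u j, v⟫ ^ 2 = ‖v‖ ^ 2 * ∑ j, ⟪u j, ‖v‖⁻¹ • v⟫ ^ 2 := by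
    rw [mul_sum]
    refine sum_congr rfl fun j _ => ?_
    rw [real_inner_smul_right]
    field_simp
  rw [hsum, mul_left_comm, mul_comm (Fintype.card ι : ℝ)]
  gcongr
  exact card_le_mul_sum_inner_sq_of_norm_eq_one hub hcov hsep hη hη₀ hC₁ hw

end Net

theorem net_covariance_bounds_general (k : ℕ) :
    ∃ η₀ > (0 : ℝ), ∀ C₁ : ℝ, 1 ≤ C₁ → ∃ C₂ ≥ (1 : ℝ),
      ∀ (η : ℝ), 0 < η → η ≤ η₀ →
      ∀ (N : ℕ) (u : Fin N → EuclideanSpace ℝ (Fin k)),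
        (∀ j, u j ∈ Metric.closedBall (0 : EuclideanSpace ℝ (Fin k)) 1) →
        (∀ y ∈ Metric.closedBall (0 : EuclideanSpace ℝ (Fin k)) 1, ∃ j, ‖y - u j‖ ≤ η) →
        (∀ j l, j ≠ l → η / C₁ ≤ ‖u j - u l‖) →
        ∀ v : EuclideanSpace ℝ (Fin k),
          ‖v‖ ^ 2 / C₂ ≤ (1 / N) * ∑ j, (inner ℝ (u j) v : ℝ) ^ 2 ∧
          (1 / N) * ∑ j, (inner ℝ (u j) v : ℝ) ^ 2 ≤ C₂ * ‖v‖ ^ 2 := by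
  refine ⟨1 / 4, by norm_num, fun C₁ hC₁ => ?_⟩
  have hC₂ : 1 ≤ 16 * (24 * C₁) ^ k := by
    nlinarith [one_le_pow₀ (n := k) (by linarith : (1 : ℝ) ≤ 24 * C₁)]
  refine ⟨_, hC₂, fun η hη hη₀ N u hub hcov hsep v => ?_⟩
  have hN : (0 : ℝ) < N := by
    obtain ⟨j, -⟩ := hcov 0 (Metric.mem_closedBall_self zero_le_one)
    exact_mod_cast j.pos
  have hlow := card_mul_sq_norm_le_mul_sum_inner_sq hub hcov hsep hη hη₀ hC₁ v
  have hup := sum_inner_sq_le_card_mul_sq_norm (fun j => mem_closedBall_zero_iff.1 (hub j)) v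
  simp only [Fintype.card_fin, finrank_euclideanSpace_fin] at hlow hup
  rw [one_div, inv_mul_eq_div]
  constructor
  · rw [div_le_div_iff₀ (by linarith) hN]
    linarith
  · rw [div_le_iff₀ hN]
    nlinarith [sq_nonneg ‖v‖]

/-- There is `η₀ > 0` depending only on `k` such that for any `C₁ ≥ 1` there is
`C₂ ≥ 1` (depending only on `k` and `C₁`) with: whenever `0 < η ≤ η₀` and `u₁, …, u_N` form an
`(η, 1/C₁)`-net of the closed unit ball `B̄` of `ℝ^k`, the matrix `Σ = (1/N)·Σ_j u_j u_jᵀ`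
satisfies `(1/C₂)·I ≼ Σ ≼ C₂·I`, i.e.
`‖v‖²/C₂ ≤ ⟨Σv, v⟩ = (1/N)·Σ_j ⟨u_j, v⟩² ≤ C₂·‖v‖²` for every `v`. -/
theorem net_covariance_bounds (k : ℕ) (hk : 0 < k) :
    ∃ η₀ > (0 : ℝ), ∀ C₁ : ℝ, 1 ≤ C₁ → ∃ C₂ ≥ (1 : ℝ),
      ∀ (η : ℝ), 0 < η → η ≤ η₀ →
      ∀ (N : ℕ) (u : Fin N → EuclideanSpace ℝ (Fin k)),
        (∀ j, u j ∈ Metric.closedBall (0 : EuclideanSpace ℝ (Fin k)) 1) →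
        (∀ y ∈ Metric.closedBall (0 : EuclideanSpace ℝ (Fin k)) 1, ∃ j, ‖y - u j‖ ≤ η) →
        (∀ j l, j ≠ l → η / C₁ ≤ ‖u j - u l‖) →
        ∀ v : EuclideanSpace ℝ (Fin k),
          ‖v‖ ^ 2 / C₂ ≤ (1 / N) * ∑ j, (inner ℝ (u j) v : ℝ) ^ 2 ∧
          (1 / N) * ∑ j, (inner ℝ (u j) v : ℝ) ^ 2 ≤ C₂ * ‖v‖ ^ 2 :=
  net_covariance_bounds_general k
end

section
/- For every A > 0 and every ε > 0, the arc length η of the graph of h over [0, ε] satisfies ε + C₁ε³ − C₂ε⁵ ≤ η ≤ ε + C₁ε³. -/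
open Set intervalIntegral

/-- The tri-cube function `w(t) = (1 − |t|³)₊³`. -/
noncomputable def triCube (t : ℝ) : ℝ := (max (1 - |t| ^ 3) 0) ^ 3

/-! The graph of `h` has slope `h' = (Aε/2)·w'(2t/ε − 1)`, and
`1 + y/2 − y²/8 ≤ √(1 + y) ≤ 1 + y/2` for `y ≥ 0`. Taking `y = h'²` and integrating over
`[0, ε]`, the substitution `s = 2t/ε − 1` turns `∫ h'²/2` into `C₁ε³` and `∫ h'⁴/8` into `C₂ε⁵`.
The tri-cube function is `C¹`, so `h'` is continuous and all integrals involved exist. -/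

theorem hasDerivAt_max_zero_pow (n : ℕ) (x : ℝ) :
    HasDerivAt (fun u : ℝ => max u 0 ^ (n + 2)) ((n + 2) * max x 0 ^ (n + 1)) x := by
  refine hasDerivAt_of_hasDerivAt_of_ne' (x := 0) (g := fun u => (n + 2) * max u 0 ^ (n + 1))
    (fun y hy => ?_) (by fun_prop) (by fun_prop) x
  rcases hy.lt_or_gt with hneg | hpos
  · have hzero : (fun u : ℝ => max u 0 ^ (n + 2)) =ᶠ[nhds y] fun _ => 0 := by
      filter_upwards [eventually_lt_nhds hneg] with u hu
      simp [max_eq_right hu.le]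
    simpa [max_eq_right hneg.le] using (hasDerivAt_const y (0 : ℝ)).congr_of_eventuallyEq hzero
  · have hid : (fun u : ℝ => max u 0 ^ (n + 2)) =ᶠ[nhds y] fun u => u ^ (n + 2) := by
      filter_upwards [eventually_gt_nhds hpos] with u hu
      rw [max_eq_left hu.le]
    simpa [max_eq_left hpos.le] using (hasDerivAt_pow (n + 2) y).congr_of_eventuallyEq hid

theorem hasDerivAt_abs_pow (n : ℕ) (x : ℝ) :
    HasDerivAt (fun u : ℝ => |u| ^ (n + 2)) ((n + 2) * x * |x| ^ n) x := by
  refine hasDerivAt_of_hasDerivAt_of_ne' (x := 0) (g := fun u => (n + 2) * u * |u| ^ n)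
    (fun y hy => ?_) (by fun_prop) (by fun_prop) x
  refine ((hasDerivAt_abs hy).pow (n + 2)).congr_deriv ?_
  have hsign : |y| * (SignType.sign y : ℝ) = y := abs_mul_sign y
  rw [show n + 2 - 1 = n + 1 by omega]
  push_cast
  linear_combination ((n : ℝ) + 2) * |y| ^ n * hsign

theorem hasDerivAt_triCube (t : ℝ) :
    HasDerivAt triCube (-9 * t * |t| * max (1 - |t| ^ 3) 0 ^ 2) t := by
  have hinner := (hasDerivAt_abs_pow 1 t).const_sub 1
  refine ((hasDerivAt_max_zero_pow 1 _).comp t hinner).congr_deriv ?_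
  push_cast
  ring

theorem differentiable_triCube : Differentiable ℝ triCube :=
  fun t => (hasDerivAt_triCube t).differentiableAt

theorem continuous_deriv_triCube : Continuous (deriv triCube) := by
  rw [show deriv triCube = _ from funext fun t => (hasDerivAt_triCube t).deriv]
  fun_prop

theorem Real.one_add_div_two_sub_sq_div_eight_le_sqrt {y : ℝ} (hy : 0 ≤ y) :
    1 + y / 2 - y ^ 2 / 8 ≤ √(1 + y) := by
  set s := √(1 + y)
  have hs_sq : s ^ 2 = 1 + y := Real.sq_sqrt (by linarith)
  have hs_one : 1 ≤ s := Real.one_le_sqrt.mpr (by linarith)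
  -- with `y = s² − 1` the difference is `(s − 1)³(s + 3)/8`
  nlinarith [mul_nonneg (pow_nonneg (sub_nonneg.mpr hs_one) 3) (by linarith : (0 : ℝ) ≤ s + 3)]

section ArcLength

variable {g : ℝ → ℝ} {a b : ℝ}

theorem integral_sqrt_one_add_sq_le (hg : Continuous g) (hab : a ≤ b) :
    ∫ t in a..b, √(1 + g t ^ 2) ≤ b - a + (∫ t in a..b, g t ^ 2) / 2 := by
  have hint {f : ℝ → ℝ} (hf : Continuous f) : IntervalIntegrable f MeasureTheory.volume a b :=
    hf.intervalIntegrable a b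
  calc ∫ t in a..b, √(1 + g t ^ 2)
      ≤ ∫ t in a..b, (1 + g t ^ 2 / 2) :=
        integral_mono_on hab (hint (by fun_prop)) (hint (by fun_prop))
          fun t _ => Real.sqrt_one_add_le (by linarith [sq_nonneg (g t)])
    _ = b - a + (∫ t in a..b, g t ^ 2) / 2 := by
        rw [integral_add (hint (by fun_prop)) (hint (by fun_prop)), integral_div]
        simp

theorem le_integral_sqrt_one_add_sq (hg : Continuous g) (hab : a ≤ b) :
    b - a + (∫ t in a..b, g t ^ 2) / 2 - (∫ t in a..b, g t ^ 4) / 8 ≤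
      ∫ t in a..b, √(1 + g t ^ 2) := by
  have hint {f : ℝ → ℝ} (hf : Continuous f) : IntervalIntegrable f MeasureTheory.volume a b :=
    hf.intervalIntegrable a b
  calc b - a + (∫ t in a..b, g t ^ 2) / 2 - (∫ t in a..b, g t ^ 4) / 8
      = ∫ t in a..b, (1 + g t ^ 2 / 2 - (g t ^ 2) ^ 2 / 8) := by
        simp only [← pow_mul]
        rw [integral_sub (hint (by fun_prop)) (hint (by fun_prop)),
          integral_add (hint (by fun_prop)) (hint (by fun_prop)), integral_div, integral_div]
        simp
    _ ≤ ∫ t in a..b, √(1 + g t ^ 2) :=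
        integral_mono_on hab (hint (by fun_prop)) (hint (by fun_prop))
          fun t _ => Real.one_add_div_two_sub_sq_div_eight_le_sqrt (sq_nonneg (g t))

end ArcLength

section Rescaling

variable {ε : ℝ}

theorem deriv_const_mul_comp_rescale {w : ℝ → ℝ} (hw : Differentiable ℝ w) (c : ℝ) :
    deriv (fun t => c * w (2 * t / ε - 1)) = fun t => c * (2 / ε) * deriv w (2 * t / ε - 1) := by
  funext t
  have hinner : HasDerivAt (fun t : ℝ => 2 * t / ε - 1) (2 / ε) t := by
    simpa using (((hasDerivAt_id t).const_mul 2).div_const ε).sub_const 1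
  exact (((hw _).hasDerivAt.comp t hinner).const_mul c).deriv.trans (by ring)

theorem integral_comp_rescale (f : ℝ → ℝ) (hε : ε ≠ 0) :
    ∫ t in (0 : ℝ)..ε, f (2 * t / ε - 1) = ε / 2 * ∫ s in (-1 : ℝ)..1, f s := by
  have hc : (2 : ℝ) / ε ≠ 0 := div_ne_zero two_ne_zero hε
  simp_rw [mul_div_right_comm (2 : ℝ)]
  rw [integral_comp_mul_sub f hc 1, smul_eq_mul, inv_div]
  congr 2 <;> field_simp <;> ring

end Rescaling

theorem arc_length_tricube_bump_general (A ε : ℝ) (hε : 0 < ε)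
    (h : ℝ → ℝ) (hh : h = fun t => A * (ε / 2) ^ 2 * triCube (2 * t / ε - 1))
    (η : ℝ) (hη : η = ∫ t in (0 : ℝ)..ε, Real.sqrt (1 + (deriv h t) ^ 2))
    (C₁ : ℝ) (hC₁ : C₁ = A ^ 2 / 16 * ∫ t in (-1 : ℝ)..1, (deriv triCube t) ^ 2)
    (C₂ : ℝ) (hC₂ : C₂ = A ^ 4 / 256 * ∫ t in (-1 : ℝ)..1, (deriv triCube t) ^ 4) :
    ε + C₁ * ε ^ 3 - C₂ * ε ^ 5 ≤ η ∧ η ≤ ε + C₁ * ε ^ 3 := by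
  have hderiv : deriv h = fun t => A * ε / 2 * deriv triCube (2 * t / ε - 1) := by
    rw [hh, deriv_const_mul_comp_rescale differentiable_triCube]
    field_simp
  have hcont : Continuous (deriv h) := by
    rw [hderiv]
    exact continuous_const.mul (continuous_deriv_triCube.comp (by fun_prop))
  have hpow (n : ℕ) : ∫ t in (0 : ℝ)..ε, deriv h t ^ n =
      (A * ε / 2) ^ n * (ε / 2 * ∫ s in (-1 : ℝ)..1, deriv triCube s ^ n) := by
    simp only [hderiv, mul_pow, integral_const_mul]
    rw [integral_comp_rescale (deriv triCube · ^ n) hε.ne']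
  have lower := le_integral_sqrt_one_add_sq hcont hε.le
  have upper := integral_sqrt_one_add_sq_le hcont hε.le
  simp only [hpow, sub_zero] at lower upper
  rw [hη, hC₁, hC₂]
  constructor
  · convert lower using 2 <;> ring
  · convert upper using 2; ring

/-- For every `A > 0` and `ε > 0`, the arc length
`η = ∫_0^ε √(1 + h'(t)²) dt` of the graph of `h(t) = A(ε/2)²·w(2t/ε − 1)` over `[0, ε]`
satisfies `ε + C₁ε³ − C₂ε⁵ ≤ η ≤ ε + C₁ε³`, where
`C₁ = (A²/16)·∫_{−1}^1 w'(t)² dt` and `C₂ = (A⁴/256)·∫_{−1}^1 w'(t)⁴ dt`. -/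
theorem arc_length_tricube_bump (A ε : ℝ) (hA : 0 < A) (hε : 0 < ε)
    (h : ℝ → ℝ) (hh : h = fun t => A * (ε / 2) ^ 2 * triCube (2 * t / ε - 1))
    (η : ℝ) (hη : η = ∫ t in (0 : ℝ)..ε, Real.sqrt (1 + (deriv h t) ^ 2))
    (C₁ : ℝ) (hC₁ : C₁ = A ^ 2 / 16 * ∫ t in (-1 : ℝ)..1, (deriv triCube t) ^ 2)
    (C₂ : ℝ) (hC₂ : C₂ = A ^ 4 / 256 * ∫ t in (-1 : ℝ)..1, (deriv triCube t) ^ 4) :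
    ε + C₁ * ε ^ 3 - C₂ * ε ^ 5 ≤ η ∧ η ≤ ε + C₁ * ε ^ 3 :=
  arc_length_tricube_bump_general A ε hε h hh η hη C₁ hC₁ C₂ hC₂
end

section
/- In the two-curve setting below, suppose C₂ε² ≤ C₁/2 and C₁ε² ≤ 1. Then for all 1 ≤ i < j ≤ n and for every real number δ (an arbitrary estimate of the intrinsic distance), max{|δ − d_{M₁}(x_i, x_j)|, |δ − d_{M₂}(x_i, x_j)|} ≥ (C₁/8)·ε²·max{d_{M₁}(x_i, x_j), d_{M₂}(x_i, x_j)}. That is, no estimator based only on the common sample points x₁,…,x_n can achieve relative error better than order ε² simultaneously for M₁ and M₂. -/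
open Set
open scoped ENNReal

/-- The point `(x, y) ∈ ℝ²` (as `EuclideanSpace ℝ (Fin 2)`). -/
noncomputable def pt2 (x y : ℝ) : EuclideanSpace ℝ (Fin 2) :=
  (WithLp.equiv 2 (Fin 2 → ℝ)).symm ![x, y]

/-- The bump-train function `g(t) = A(ε/2)²·Σ_{i=1}^{n−1} w((t − (i−1/2)ε)/(ε/2))`. -/
noncomputable def bumpTrain (A ε : ℝ) (n : ℕ) (t : ℝ) : ℝ :=
  A * (ε / 2) ^ 2 * ∑ i ∈ Finset.range (n - 1), triCube ((t - ((i : ℝ) + 1 / 2) * ε) / (ε / 2))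

/-!
Both curves pass through the sample points. On `M₁` the points `x_i, x_j` are joined by a segment
of length `(j - i)ε`. A curve in `M₂` is determined by its first coordinate, which by the
intermediate value theorem passes in order through the grid points `kε` and the bump centres
`(k + 1/2)ε`, where the height of `M₂` is `0` and `A(ε/2)²` respectively; hence its length is at
least that of the inscribed polygon, `(j - i)ε·√(1 + (Aε/2)²)`. With `∫ w'² = 19683/6545` and
`∫ w'⁴ = 486/55`, the condition `C₂ε² ≤ C₁/2` bounds `A²ε²`, which gives
`d_{M₁} ≤ (1 - C₁ε²/4)·d_{M₂}`, and no `δ` is closer than half this gap to both distances.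
-/

open scoped NNReal

noncomputable def triCubeDeriv (t : ℝ) : ℝ := -9 * t * |t| * max (1 - |t| ^ 3) 0 ^ 2

lemma hasDerivAt_abs_pow_three (x : ℝ) :
    HasDerivAt (fun t : ℝ ↦ |t| ^ 3) (3 * x * |x|) x := by
  convert hasDerivAt_abs_rpow x (p := 3) (by norm_num) using 1
  · ext t
    exact_mod_cast (Real.rpow_natCast |t| 3).symm
  · norm_num
    ring

lemma hasDerivAt_max_zero_pow_three (x : ℝ) :
    HasDerivAt (fun s : ℝ ↦ max s 0 ^ 3) (3 * max x 0 ^ 2) x := by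
  have max_pow_three (s : ℝ) : max s 0 ^ 3 = (s ^ 3 + |s| ^ 3) / 2 := by
    rcases le_total s 0 with hs | hs
    · rw [max_eq_right hs, abs_of_nonpos hs]; ring
    · rw [max_eq_left hs, abs_of_nonneg hs]; ring
  rw [show (fun s : ℝ ↦ max s 0 ^ 3) = fun s ↦ (s ^ 3 + |s| ^ 3) / 2 from funext max_pow_three]
  refine (((hasDerivAt_pow 3 x).add (hasDerivAt_abs_pow_three x)).div_const 2).congr_deriv ?_
  rcases le_total x 0 with hx | hx
  · rw [max_eq_right hx, abs_of_nonpos hx]; push_cast; ring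
  · rw [max_eq_left hx, abs_of_nonneg hx]; push_cast; ring

lemma hasDerivAt_triCube_s16 (x : ℝ) : HasDerivAt triCube (triCubeDeriv x) x := by
  refine ((hasDerivAt_max_zero_pow_three _).comp x
    ((hasDerivAt_const x 1).sub (hasDerivAt_abs_pow_three x))).congr_deriv ?_
  rw [triCubeDeriv, Pi.sub_apply]
  ring

lemma deriv_triCube : deriv triCube = triCubeDeriv :=
  funext fun x ↦ (hasDerivAt_triCube_s16 x).deriv

lemma continuous_triCubeDeriv : Continuous triCubeDeriv := by
  unfold triCubeDeriv
  fun_prop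

lemma contDiff_triCube : ContDiff ℝ 1 triCube :=
  contDiff_one_iff_deriv.2 ⟨fun x ↦ (hasDerivAt_triCube_s16 x).differentiableAt,
    deriv_triCube ▸ continuous_triCubeDeriv⟩

lemma triCubeDeriv_neg (t : ℝ) : triCubeDeriv (-t) = -triCubeDeriv t := by
  simp only [triCubeDeriv, abs_neg]
  ring

lemma triCubeDeriv_of_mem_Icc {t : ℝ} (ht : t ∈ Icc (0 : ℝ) 1) :
    triCubeDeriv t = -9 * t ^ 2 * (1 - t ^ 3) ^ 2 := by
  have : t ^ 3 ≤ 1 := pow_le_one₀ ht.1 ht.2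
  rw [triCubeDeriv, abs_of_nonneg ht.1, max_eq_left (by linarith)]
  ring

lemma integral_neg_self_eq_two_mul {f : ℝ → ℝ} (hf : ∀ x, f (-x) = f x) (a : ℝ)
    (hint : IntervalIntegrable f MeasureTheory.volume (-a) a) :
    ∫ x in -a..a, f x = 2 * ∫ x in 0..a, f x := by
  have hneg : ∫ x in -a..0, f x = ∫ x in 0..a, f x := by
    simpa [hf] using (intervalIntegral.integral_comp_neg (a := 0) (b := a) f).symm
  have h0 : (0 : ℝ) ∈ uIcc (-a) a := by rcases le_total 0 a with ha | ha <;> simp [ha]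
  rw [← intervalIntegral.integral_add_adjacent_intervals (b := 0)
    (hint.mono_set (uIcc_subset_uIcc left_mem_uIcc h0))
    (hint.mono_set (uIcc_subset_uIcc h0 right_mem_uIcc)), hneg, two_mul]

lemma integral_triCubeDeriv_pow_even (k : ℕ) :
    ∫ t in (-1 : ℝ)..1, triCubeDeriv t ^ (2 * k) =
      2 * ∫ t in (0 : ℝ)..1, (9 * t ^ 2 * (1 - t ^ 3) ^ 2) ^ (2 * k) := by
  have heven : Even (2 * k) := ⟨k, two_mul k⟩
  rw [integral_neg_self_eq_two_mul (f := fun t ↦ triCubeDeriv t ^ (2 * k))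
    (fun t ↦ by rw [triCubeDeriv_neg, heven.neg_pow]) 1
    ((continuous_triCubeDeriv.pow (2 * k)).intervalIntegrable _ _)]
  refine congrArg (2 * ·) (intervalIntegral.integral_congr fun t ht ↦ ?_)
  rw [uIcc_of_le zero_le_one] at ht
  simp only [triCubeDeriv_of_mem_Icc ht, neg_mul, heven.neg_pow]

lemma integral_deriv_triCube_sq : ∫ t in (-1 : ℝ)..1, deriv triCube t ^ 2 = 19683 / 6545 := by
  rw [deriv_triCube, integral_triCubeDeriv_pow_even 1]
  ring_nf
  simp (disch := exact Continuous.intervalIntegrable (by fun_prop) _ _) only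
    [intervalIntegral.integral_sub, intervalIntegral.integral_add,
      intervalIntegral.integral_mul_const, integral_pow]
  norm_num

lemma integral_deriv_triCube_pow_four : ∫ t in (-1 : ℝ)..1, deriv triCube t ^ 4 = 486 / 55 := by
  rw [deriv_triCube, integral_triCubeDeriv_pow_even 2]
  ring_nf
  simp (disch := exact Continuous.intervalIntegrable (by fun_prop) _ _) only
    [intervalIntegral.integral_sub, intervalIntegral.integral_add,
      intervalIntegral.integral_mul_const, integral_pow]
  norm_num

lemma pt2_apply_zero (x y : ℝ) : pt2 x y 0 = x := rfl

lemma dist_pt2 (x y x' y' : ℝ) :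
    dist (pt2 x y) (pt2 x' y') = √((x - x') ^ 2 + (y - y') ^ 2) := by
  rw [EuclideanSpace.dist_eq]
  simp [pt2, Fin.sum_univ_two, Real.dist_eq, sq_abs]

lemma dist_pt2_le (x y x' y' : ℝ) : dist (pt2 x y) (pt2 x' y') ≤ dist x x' + dist y y' := by
  rw [dist_pt2, Real.dist_eq, Real.dist_eq]
  refine Real.sqrt_le_iff.2 ⟨by positivity, ?_⟩
  nlinarith [sq_abs (x - x'), sq_abs (y - y'), abs_nonneg (x - x'), abs_nonneg (y - y')]

def euclideanGraph (g : ℝ → ℝ) : Set (EuclideanSpace ℝ (Fin 2)) :=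
  {p | ∃ t ∈ Icc (0 : ℝ) 1, p = pt2 t (g t)}

lemma intrinsicDist_euclideanGraph_le {g : ℝ → ℝ} {K : ℝ≥0} (hg : LipschitzOnWith K g (Icc 0 1))
    {a b : ℝ} (ha : 0 ≤ a) (hab : a ≤ b) (hb : b ≤ 1) :
    intrinsicDist (euclideanGraph g) (pt2 a (g a)) (pt2 b (g b)) ≤
      ENNReal.ofReal ((1 + K) * (b - a)) := by
  set F : ℝ → EuclideanSpace ℝ (Fin 2) := fun s ↦ pt2 s (g s)
  have hF : LipschitzOnWith (1 + K) F (Icc 0 1) := by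
    refine LipschitzOnWith.of_dist_le_mul fun s hs s' hs' ↦ ?_
    calc dist (F s) (F s') ≤ dist s s' + dist (g s) (g s') := dist_pt2_le _ _ _ _
      _ ≤ dist s s' + K * dist s s' := by gcongr; exact hg.dist_le_mul s hs s' hs'
      _ = ↑(1 + K) * dist s s' := by rw [NNReal.coe_add, NNReal.coe_one, one_add_mul]
  set ℓ : ℝ → ℝ := fun v ↦ a + v * (b - a)
  have hℓ_mono : Monotone ℓ := fun v v' h ↦ by simp only [ℓ]; gcongr
  have hℓ_maps : MapsTo ℓ (Icc 0 1) (Icc 0 1) := fun v hv ↦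
    ⟨by nlinarith [hv.1], by nlinarith [hv.2]⟩
  refine sInf_le_of_le ⟨F ∘ ℓ, hF.continuousOn.comp (by fun_prop) hℓ_maps,
    fun v hv ↦ ⟨ℓ v, hℓ_maps hv, rfl⟩, by simp [F, ℓ], by simp [F, ℓ], rfl⟩ ?_
  calc eVariationOn (F ∘ ℓ) (Icc 0 1) ≤ ↑(1 + K) * eVariationOn ℓ (Icc 0 1) :=
        hF.comp_eVariationOn_le hℓ_maps
    _ = ↑(1 + K) * ENNReal.ofReal (b - a) := by
        rw [← inter_self (Icc (0 : ℝ) 1), (hℓ_mono.monotoneOn _).eVariationOn_eq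
          (left_mem_Icc.2 zero_le_one) (right_mem_Icc.2 zero_le_one)]
        simp [ℓ]
    _ = ENNReal.ofReal ((1 + K) * (b - a)) := by
        rw [ENNReal.ofReal_mul (by positivity), ← NNReal.coe_one, ← NNReal.coe_add,
          ENNReal.ofReal_coe_nnreal]

lemma intrinsicDist_euclideanGraph_ne_top {g : ℝ → ℝ} (hg : ContDiff ℝ 1 g) {a b : ℝ}
    (ha : 0 ≤ a) (hab : a ≤ b) (hb : b ≤ 1) :
    intrinsicDist (euclideanGraph g) (pt2 a (g a)) (pt2 b (g b)) ≠ ⊤ := by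
  obtain ⟨K, hK⟩ :=
    hg.contDiffOn.exists_lipschitzOnWith one_ne_zero (convex_Icc 0 1) isCompact_Icc
  exact ne_top_of_le_ne_top ENNReal.ofReal_ne_top (intrinsicDist_euclideanGraph_le hK ha hab hb)

lemma toReal_intrinsicDist_segment_le {a b : ℝ} (ha : 0 ≤ a) (hab : a ≤ b) (hb : b ≤ 1) :
    (intrinsicDist (euclideanGraph fun _ ↦ 0) (pt2 a 0) (pt2 b 0)).toReal ≤ b - a := by
  refine ENNReal.toReal_le_of_le_ofReal (sub_nonneg.2 hab) ?_
  simpa using intrinsicDist_euclideanGraph_le (g := fun _ ↦ 0) (K := 0)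
    (LipschitzWith.const 0).lipschitzOnWith ha hab hb

lemma exists_monotoneOn_chain {φ : ℝ → ℝ} {a b : ℝ} (hab : a ≤ b) (hφ : ContinuousOn φ (Icc a b))
    {t : ℕ → ℝ} : ∀ {N : ℕ}, MonotoneOn t (Iic N) → φ a ≤ t 0 → t N ≤ φ b →
      ∃ u : ℕ → ℝ, MonotoneOn u (Iic N) ∧ ∀ k ≤ N, u k ∈ Icc a b ∧ φ (u k) = t k
  | 0, _, h0, hN => by
    obtain ⟨v, hv, hφv⟩ := intermediate_value_Icc hab hφ ⟨h0, hN⟩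
    exact ⟨fun _ ↦ v, monotoneOn_const, fun k hk ↦ by
      obtain rfl : k = 0 := Nat.le_zero.1 hk
      exact ⟨hv, hφv⟩⟩
  | N + 1, ht, h0, hN => by
    have htN : t N ≤ t (N + 1) := ht (by simp) (by simp) N.le_succ
    obtain ⟨u, hu, huN⟩ := exists_monotoneOn_chain hab hφ
      (ht.mono (Iic_subset_Iic.2 N.le_succ)) h0 (htN.trans hN)
    obtain ⟨⟨huNa, huNb⟩, hφuN⟩ := huN N le_rfl
    obtain ⟨v, hv, hφv⟩ := intermediate_value_Icc huNb (hφ.mono (Icc_subset_Icc_left huNa))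
      ⟨hφuN ▸ htN, hN⟩
    refine ⟨fun k ↦ if k ≤ N then u k else v, fun k hk l hl hkl ↦ ?_, fun k hk ↦ ?_⟩
    · simp only [mem_Iic] at hk hl ⊢
      split_ifs with hkN hlN hlN
      · exact hu hkN hlN hkl
      · exact (hu hkN (mem_Iic.2 le_rfl) hkN).trans hv.1
      · omega
      · exact le_rfl
    · simp only
      split_ifs with hkN
      · exact huN k hkN
      · obtain rfl : k = N + 1 := by omega
        exact ⟨⟨huNa.trans hv.1, hv.2⟩, hφv⟩

lemma sum_edist_le_intrinsicDist_euclideanGraph (g : ℝ → ℝ) {t : ℕ → ℝ} {N : ℕ}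
    (ht : MonotoneOn t (Iic N)) :
    ∑ k ∈ Finset.range N, edist (pt2 (t (k + 1)) (g (t (k + 1)))) (pt2 (t k) (g (t k))) ≤
      intrinsicDist (euclideanGraph g) (pt2 (t 0) (g (t 0))) (pt2 (t N) (g (t N))) := by
  refine le_sInf ?_
  rintro _ ⟨γ, hγ, hγg, hγ0, hγ1, rfl⟩
  have hγ_eq : ∀ v ∈ Icc (0 : ℝ) 1, γ v = pt2 (γ v 0) (g (γ v 0)) := fun v hv ↦ by
    obtain ⟨s, -, hs⟩ := hγg hv
    rw [hs, pt2_apply_zero]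
  obtain ⟨u, hu, hu_chain⟩ := exists_monotoneOn_chain (φ := fun v ↦ γ v 0) zero_le_one
    ((EuclideanSpace.proj (0 : Fin 2)).continuous.comp_continuousOn hγ)
    ht (by simp [hγ0, pt2_apply_zero]) (by simp [hγ1, pt2_apply_zero])
  calc ∑ k ∈ Finset.range N, edist (pt2 (t (k + 1)) (g (t (k + 1)))) (pt2 (t k) (g (t k)))
      = ∑ k ∈ Finset.range N, edist (γ (u (k + 1))) (γ (u k)) := by
        refine Finset.sum_congr rfl fun k hk ↦ ?_
        have hk : k < N := Finset.mem_range.1 hk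
        rw [hγ_eq _ (hu_chain k hk.le).1, hγ_eq _ (hu_chain (k + 1) hk).1, (hu_chain k hk.le).2,
          (hu_chain (k + 1) hk).2]
    _ ≤ eVariationOn γ (Icc 0 1) :=
        eVariationOn.sum_le_of_monotoneOn_Iic hu fun k hk ↦ (hu_chain k hk).1

lemma triCube_eq_zero_of_one_le_abs {t : ℝ} (ht : 1 ≤ |t|) : triCube t = 0 := by
  rw [triCube, max_eq_right (by nlinarith [one_le_pow₀ (n := 3) ht]), zero_pow three_ne_zero]

lemma contDiff_bumpTrain (A ε : ℝ) (n : ℕ) : ContDiff ℝ 1 (bumpTrain A ε n) := by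
  unfold bumpTrain
  have := contDiff_triCube
  fun_prop

section bumpTrain

variable {A ε : ℝ} {n : ℕ}

lemma bumpTrain_natCast_mul (hε : ε ≠ 0) (k : ℕ) : bumpTrain A ε n (k * ε) = 0 := by
  rw [bumpTrain, Finset.sum_eq_zero, mul_zero]
  intro i _
  have harg : (k * ε - (i + 1 / 2) * ε) / (ε / 2) = ((2 * ((k : ℤ) - i) - 1 : ℤ) : ℝ) := by
    push_cast
    field_simp
    ring
  rw [harg, triCube_eq_zero_of_one_le_abs]
  exact_mod_cast Int.one_le_abs (z := 2 * ((k : ℤ) - i) - 1) (by omega)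

lemma bumpTrain_natCast_add_half_mul (hε : ε ≠ 0) {k : ℕ} (hk : k < n - 1) :
    bumpTrain A ε n ((k + 1 / 2) * ε) = A * (ε / 2) ^ 2 := by
  rw [bumpTrain, Finset.sum_eq_single_of_mem k (Finset.mem_range.2 hk)]
  · rw [sub_self, zero_div, triCube, abs_zero]
    norm_num
  · intro i _ hik
    have harg :
        ((k + 1 / 2) * ε - (i + 1 / 2) * ε) / (ε / 2) = ((2 * ((k : ℤ) - i) : ℤ) : ℝ) := by
      push_cast
      field_simp
      ring
    rw [harg, triCube_eq_zero_of_one_le_abs]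
    exact_mod_cast Int.one_le_abs (z := 2 * ((k : ℤ) - i)) (by omega)

lemma edist_pt2_bumpTrain_succ_mul_half (hε : 0 < ε) {k : ℕ} (hk : k < 2 * (n - 1)) :
    edist (pt2 ((k + 1 : ℕ) * (ε / 2)) (bumpTrain A ε n ((k + 1 : ℕ) * (ε / 2))))
        (pt2 (k * (ε / 2)) (bumpTrain A ε n (k * (ε / 2)))) =
      ENNReal.ofReal (ε / 2 * √(1 + (A * ε / 2) ^ 2)) := by
  have hrise : (bumpTrain A ε n ((k + 1 : ℕ) * (ε / 2)) - bumpTrain A ε n (k * (ε / 2))) ^ 2 =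
      (A * (ε / 2) ^ 2) ^ 2 := by
    obtain ⟨q, rfl | rfl⟩ := Nat.even_or_odd' k
    · rw [show ((2 * q + 1 : ℕ) : ℝ) * (ε / 2) = (q + 1 / 2) * ε by push_cast; ring,
        show ((2 * q : ℕ) : ℝ) * (ε / 2) = q * ε by push_cast; ring,
        bumpTrain_natCast_add_half_mul hε.ne' (by omega), bumpTrain_natCast_mul hε.ne']
      ring
    · rw [show ((2 * q + 1 + 1 : ℕ) : ℝ) * (ε / 2) = (q + 1 : ℕ) * ε by push_cast; ring,
        show ((2 * q + 1 : ℕ) : ℝ) * (ε / 2) = (q + 1 / 2) * ε by push_cast; ring,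
        bumpTrain_natCast_add_half_mul hε.ne' (by omega), bumpTrain_natCast_mul hε.ne']
      ring
  rw [edist_dist, dist_pt2, hrise,
    show ((k + 1 : ℕ) * (ε / 2) - k * (ε / 2)) ^ 2 + (A * (ε / 2) ^ 2) ^ 2 =
      (ε / 2) ^ 2 * (1 + (A * ε / 2) ^ 2) by push_cast; ring,
    Real.sqrt_mul (by positivity), Real.sqrt_sq (by positivity)]

lemma le_intrinsicDist_euclideanGraph_bumpTrain (hε : 0 < ε) {p q : ℕ} (hpq : p ≤ q)
    (hq : q ≤ n - 1) :
    ENNReal.ofReal (√(1 + (A * ε / 2) ^ 2) * (q * ε - p * ε)) ≤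
      intrinsicDist (euclideanGraph (bumpTrain A ε n)) (pt2 (p * ε) 0) (pt2 (q * ε) 0) := by
  set t : ℕ → ℝ := fun k ↦ (2 * p + k : ℕ) * (ε / 2)
  have ht : Monotone t := fun k l hkl ↦ by simp only [t]; gcongr
  have ht0 : t 0 = p * ε := by simp only [t]; push_cast; ring
  have htN : t (2 * (q - p)) = q * ε := by
    simp only [t]
    rw [show 2 * p + 2 * (q - p) = 2 * q by omega]
    push_cast
    ring
  have hsum := sum_edist_le_intrinsicDist_euclideanGraph (bumpTrain A ε n) (ht.monotoneOn _)
    (N := 2 * (q - p))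
  rw [ht0, htN, bumpTrain_natCast_mul hε.ne', bumpTrain_natCast_mul hε.ne'] at hsum
  calc ENNReal.ofReal (√(1 + (A * ε / 2) ^ 2) * (q * ε - p * ε))
      = ∑ k ∈ Finset.range (2 * (q - p)), ENNReal.ofReal (ε / 2 * √(1 + (A * ε / 2) ^ 2)) := by
        rw [Finset.sum_const, Finset.card_range, nsmul_eq_mul, ← ENNReal.ofReal_natCast,
          ← ENNReal.ofReal_mul (by positivity)]
        push_cast [hpq]
        ring_nf
    _ = _ := Finset.sum_congr rfl fun k hk ↦ (edist_pt2_bumpTrain_succ_mul_half hε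
        (k := 2 * p + k) (by rw [Finset.mem_range] at hk; omega)).symm
    _ ≤ _ := hsum

lemma le_toReal_intrinsicDist_euclideanGraph_bumpTrain (hε : 0 < ε) {p q : ℕ} (hpq : p ≤ q)
    (hq : q ≤ n - 1) (hqε : q * ε ≤ 1) :
    √(1 + (A * ε / 2) ^ 2) * (q * ε - p * ε) ≤ ENNReal.toReal
      (intrinsicDist (euclideanGraph (bumpTrain A ε n)) (pt2 (p * ε) 0) (pt2 (q * ε) 0)) := by
  have hfin := intrinsicDist_euclideanGraph_ne_top (contDiff_bumpTrain A ε n) (a := p * ε)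
    (by positivity) (by gcongr) hqε
  rw [bumpTrain_natCast_mul hε.ne', bumpTrain_natCast_mul hε.ne'] at hfin
  exact (ENNReal.ofReal_le_iff_le_toReal hfin).1
    (le_intrinsicDist_euclideanGraph_bumpTrain hε hpq hq)

end bumpTrain

lemma mul_max_le_max_abs_sub {c d₁ d₂ : ℝ} (δ : ℝ) (hc : 0 ≤ c) (hd₂ : 0 ≤ d₂)
    (h : d₁ ≤ (1 - 2 * c) * d₂) : c * max d₁ d₂ ≤ max |δ - d₁| |δ - d₂| := by
  rw [max_eq_right (by nlinarith)]
  linarith [le_abs_self (δ - d₁), neg_abs_le (δ - d₂), le_max_left |δ - d₁| |δ - d₂|,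
    le_max_right |δ - d₁| |δ - d₂|]

lemma one_le_one_sub_mul_sqrt {A ε C₁ C₂ : ℝ} (hC₁ : C₁ = A ^ 2 / 16 * (19683 / 6545))
    (hC₂ : C₂ = A ^ 4 / 256 * (486 / 55)) (h : C₂ * ε ^ 2 ≤ C₁ / 2) :
    1 ≤ (1 - 2 * (C₁ / 8 * ε ^ 2)) * √(1 + (A * ε / 2) ^ 2) := by
  subst hC₁ hC₂
  have hu₀ : 0 ≤ A ^ 2 * ε ^ 2 := by positivity
  -- `h · ε²` is a quadratic inequality in `A²ε²`
  have hu : A ^ 2 * ε ^ 2 ≤ 324 / 119 := by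
    nlinarith [mul_le_mul_of_nonneg_right h (sq_nonneg ε)]
  have hκ : 0 ≤ 1 - 19683 / 418880 * (A ^ 2 * ε ^ 2) := by linarith
  rw [show 1 - 2 * (A ^ 2 / 16 * (19683 / 6545) / 8 * ε ^ 2) =
      1 - 19683 / 418880 * (A ^ 2 * ε ^ 2) by ring,
    ← Real.sqrt_sq hκ, ← Real.sqrt_mul (sq_nonneg _)]
  refine Real.one_le_sqrt.2 ?_
  nlinarith [mul_nonneg (mul_nonneg hu₀ hu₀) hu₀, mul_nonneg (sub_nonneg.2 hu) hu₀]

theorem two_curve_minimax_lower_bound_general (A : ℝ) (n : ℕ)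
    (ε : ℝ) (hε : ε = 1 / ((n : ℝ) - 1))
    (M₁ M₂ : Set (EuclideanSpace ℝ (Fin 2)))
    (hM₁ : M₁ = {p | ∃ t ∈ Icc (0 : ℝ) 1, p = pt2 t 0})
    (hM₂ : M₂ = {p | ∃ t ∈ Icc (0 : ℝ) 1, p = pt2 t (bumpTrain A ε n t)})
    (x : ℕ → EuclideanSpace ℝ (Fin 2)) (hx : ∀ i, x i = pt2 (((i : ℝ) - 1) * ε) 0)
    (C₁ : ℝ) (hC₁ : C₁ = A ^ 2 / 16 * ∫ t in (-1 : ℝ)..1, (deriv triCube t) ^ 2)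
    (C₂ : ℝ) (hC₂ : C₂ = A ^ 4 / 256 * ∫ t in (-1 : ℝ)..1, (deriv triCube t) ^ 4)
    (hsmall₁ : C₂ * ε ^ 2 ≤ C₁ / 2) (hsmall₂ : C₁ * ε ^ 2 ≤ 1)
    (i j : ℕ) (hi : 1 ≤ i) (hij : i < j) (hj : j ≤ n) (δ : ℝ) :
    C₁ / 8 * ε ^ 2 *
        max (intrinsicDist M₁ (x i) (x j)).toReal (intrinsicDist M₂ (x i) (x j)).toReal ≤
      max |δ - (intrinsicDist M₁ (x i) (x j)).toReal|
        |δ - (intrinsicDist M₂ (x i) (x j)).toReal| := by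
  obtain ⟨p, rfl⟩ : ∃ p, i = p + 1 := ⟨i - 1, by omega⟩
  obtain ⟨q, rfl⟩ : ∃ q, j = q + 1 := ⟨j - 1, by omega⟩
  have hn₁ : (1 : ℝ) < n := by exact_mod_cast (by omega : 1 < n)
  have hε₀ : 0 < ε := by rw [hε]; exact one_div_pos.2 (by linarith)
  have hqε : q * ε ≤ 1 := by
    rw [hε, mul_one_div, div_le_one (by linarith)]
    exact le_sub_iff_add_le.2 (by exact_mod_cast hj)
  have hpqε : (p : ℝ) * ε ≤ q * ε := by gcongr; omega
  have hx_grid (k : ℕ) : x (k + 1) = pt2 (k * ε) 0 := by rw [hx]; push_cast; ring_nf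
  obtain rfl : M₁ = euclideanGraph fun _ ↦ 0 := hM₁
  obtain rfl : M₂ = euclideanGraph (bumpTrain A ε n) := hM₂
  rw [integral_deriv_triCube_sq] at hC₁
  rw [integral_deriv_triCube_pow_four] at hC₂
  rw [hx_grid, hx_grid]
  refine mul_max_le_max_abs_sub δ (by rw [hC₁]; positivity) ENNReal.toReal_nonneg ?_
  calc _ ≤ q * ε - p * ε := toReal_intrinsicDist_segment_le (by positivity) hpqε hqε
    _ ≤ (1 - 2 * (C₁ / 8 * ε ^ 2)) * √(1 + (A * ε / 2) ^ 2) * (q * ε - p * ε) :=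
        le_mul_of_one_le_left (by linarith) (one_le_one_sub_mul_sqrt hC₁ hC₂ hsmall₁)
    _ ≤ _ := by
        rw [mul_assoc]
        exact mul_le_mul_of_nonneg_left
          (le_toReal_intrinsicDist_euclideanGraph_bumpTrain hε₀ (by omega) (by omega) hqε)
          (by linarith)

/-- In the two-curve setting, if `C₂ε² ≤ C₁/2` and `C₁ε² ≤ 1`, then for all
`1 ≤ i < j ≤ n` and every real estimate `δ`,
`max{|δ − d_{M₁}(x_i,x_j)|, |δ − d_{M₂}(x_i,x_j)|} ≥ (C₁/8)ε²·max{d_{M₁}, d_{M₂}}`: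
no estimator based on the common sample points beats relative error of order `ε²`. -/
theorem two_curve_minimax_lower_bound (A : ℝ) (hA : 0 < A) (n : ℕ) (hn : 2 ≤ n)
    (ε : ℝ) (hε : ε = 1 / ((n : ℝ) - 1))
    (M₁ M₂ : Set (EuclideanSpace ℝ (Fin 2)))
    (hM₁ : M₁ = {p | ∃ t ∈ Icc (0 : ℝ) 1, p = pt2 t 0})
    (hM₂ : M₂ = {p | ∃ t ∈ Icc (0 : ℝ) 1, p = pt2 t (bumpTrain A ε n t)})
    (x : ℕ → EuclideanSpace ℝ (Fin 2)) (hx : ∀ i, x i = pt2 (((i : ℝ) - 1) * ε) 0)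
    (C₁ : ℝ) (hC₁ : C₁ = A ^ 2 / 16 * ∫ t in (-1 : ℝ)..1, (deriv triCube t) ^ 2)
    (C₂ : ℝ) (hC₂ : C₂ = A ^ 4 / 256 * ∫ t in (-1 : ℝ)..1, (deriv triCube t) ^ 4)
    (hsmall₁ : C₂ * ε ^ 2 ≤ C₁ / 2) (hsmall₂ : C₁ * ε ^ 2 ≤ 1)
    (i j : ℕ) (hi : 1 ≤ i) (hij : i < j) (hj : j ≤ n) (δ : ℝ) :
    C₁ / 8 * ε ^ 2 *
        max (intrinsicDist M₁ (x i) (x j)).toReal (intrinsicDist M₂ (x i) (x j)).toReal ≤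
      max |δ - (intrinsicDist M₁ (x i) (x j)).toReal|
        |δ - (intrinsicDist M₂ (x i) (x j)).toReal| :=
  two_curve_minimax_lower_bound_general A n ε hε M₁ M₂ hM₁ hM₂ x hx C₁ hC₁ C₂ hC₂ hsmall₁ hsmall₂ i
    j hi hij hj δ
end

section
/- Let k, m be positive integers, and for each multi-index i = (i₁,…,i_k) ∈ {1,…,m}^k let u_i := (i₁,…,i_k) ∈ ℝ^k and v_i := (α₁i₁, …, α_k i_k) ∈ ℝ^k, where α₁,…,α_k ≥ 0 are fixed nonnegative real numbers. Let ū and v̄ denote the barycenters of (u_i) and (v_i). Then for every orthogonal linear map R : ℝ^k → ℝ^k and every t ∈ ℝ^k, Σ_{i ∈ {1,…,m}^k} ‖v_i − t − R(u_i)‖² ≥ Σ_{i ∈ {1,…,m}^k} ‖v_i − (v̄ − ū) − u_i‖²; that is, the best rigid alignment of the point set (u_i) to the point set (v_i) is achieved by the identity rotation together with the translation v̄ − ū. -/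
/-!
Write `u'ᵢ = uᵢ - ū` and `v'ᵢ = vᵢ - v̄`, so that `v'ᵢ = D u'ᵢ` with `D = diag(α)`. Since the
`u'ᵢ` sum to zero, the cross term of the translation vanishes and any `t` does at least as badly
as the one matching barycenters. After expanding the squares it remains to show
`Σ ⟪D u'ᵢ, R u'ᵢ⟫ ≤ Σ ⟪D u'ᵢ, u'ᵢ⟫`. The coordinates of a multi-index are independent under the
uniform count, so the centered grid has diagonal second moment matrix `Σ u'ᵢ u'ᵢᵀ = diag(s)`;
hence `Σ ⟪D u'ᵢ, R u'ᵢ⟫ = Σ_p α_p s_p R_pp`, and `R_pp ≤ 1` for orthogonal `R`.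
-/

section Centering

variable {ι E : Type*} [Fintype ι] [NormedAddCommGroup E] [InnerProductSpace ℝ E]

theorem sum_sub_inv_card_smul_sum (w : ι → E) :
    ∑ i, (w i - ((Fintype.card ι : ℝ))⁻¹ • ∑ j, w j) = 0 := by
  rcases isEmpty_or_nonempty ι with _ | _
  · simp
  · rw [Finset.sum_sub_distrib, Finset.sum_const, Finset.card_univ, ← Nat.cast_smul_eq_nsmul ℝ,
      smul_smul, mul_inv_cancel₀ (by positivity), one_smul, sub_self]

theorem sum_norm_sq_le_sum_norm_add_sq {w : ι → E} (hw : ∑ i, w i = 0) (b : E) :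
    ∑ i, ‖w i‖ ^ 2 ≤ ∑ i, ‖w i + b‖ ^ 2 := by
  have hcross : ∑ i, 2 * inner ℝ (w i) b = 0 := by
    rw [← Finset.mul_sum, ← sum_inner, hw, inner_zero_left, mul_zero]
  simp only [norm_add_sq_real, Finset.sum_add_distrib, hcross, add_zero]
  exact le_add_of_nonneg_right (Finset.sum_nonneg fun _ _ => sq_nonneg _)

theorem sum_norm_sub_sq_le_of_sum_inner_le {x y : ι → E} (R : E ≃ₗᵢ[ℝ] E)
    (h : ∑ i, inner ℝ (y i) (R (x i)) ≤ ∑ i, inner ℝ (y i) (x i)) :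
    ∑ i, ‖y i - x i‖ ^ 2 ≤ ∑ i, ‖y i - R (x i)‖ ^ 2 := by
  simp only [norm_sub_sq_real, R.norm_map, Finset.sum_add_distrib, Finset.sum_sub_distrib,
    ← Finset.mul_sum]
  linarith

end Centering

theorem sub_smul_sum_apply_eq_mul {ι n : Type*} [Fintype ι] {x y : ι → EuclideanSpace ℝ n}
    {α : n → ℝ} (hy : ∀ i p, y i p = α p * x i p) (c : ℝ) (i : ι) (p : n) :
    (y i - c • ∑ j, y j) p = α p * (x i - c • ∑ j, x j) p := by
  simp only [PiLp.sub_apply, PiLp.smul_apply, WithLp.ofLp_sum, Finset.sum_apply, hy,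
    smul_eq_mul, ← Finset.mul_sum]
  ring

def UncorrelatedCoords {ι n : Type*} [Fintype ι] (x : ι → EuclideanSpace ℝ n) : Prop :=
  ∀ p q, p ≠ q → ∑ i, x i p * x i q = 0

section Uncorrelated

variable {ι n : Type*} [Fintype ι] [Fintype n] [DecidableEq n]

theorem sum_mul_map_apply_of_uncorrelated {x : ι → EuclideanSpace ℝ n}
    (hx : UncorrelatedCoords x)
    (L : EuclideanSpace ℝ n →ₗ[ℝ] EuclideanSpace ℝ n) (p : n) :
    ∑ i, x i p * L (x i) p = (∑ i, x i p ^ 2) * L (EuclideanSpace.single p 1) p := by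
  have hL : ∀ z : EuclideanSpace ℝ n, L z p = ∑ q, z q * L (EuclideanSpace.single q 1) p := by
    intro z
    conv_lhs => rw [← (EuclideanSpace.basisFun n ℝ).sum_repr z]
    simp only [EuclideanSpace.basisFun_repr, EuclideanSpace.basisFun_apply, map_sum, map_smul,
      WithLp.ofLp_sum, Finset.sum_apply, PiLp.smul_apply, smul_eq_mul]
  simp_rw [fun i => hL (x i), Finset.mul_sum, ← mul_assoc]
  rw [Finset.sum_comm, Finset.sum_eq_single p]
  · simp only [← Finset.sum_mul, sq]
  · intro q _ hqp
    rw [← Finset.sum_mul, hx p q hqp.symm, zero_mul]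
  · simp

theorem sum_inner_diag_map_eq_of_uncorrelated {x y : ι → EuclideanSpace ℝ n}
    (hx : UncorrelatedCoords x) {α : n → ℝ} (hy : ∀ i p, y i p = α p * x i p)
    (L : EuclideanSpace ℝ n →ₗ[ℝ] EuclideanSpace ℝ n) :
    ∑ i, inner ℝ (y i) (L (x i)) =
      ∑ p, α p * (∑ i, x i p ^ 2) * L (EuclideanSpace.single p 1) p := by
  simp only [PiLp.inner_apply, RCLike.inner_apply, conj_trivial, hy]
  rw [Finset.sum_comm]
  refine Finset.sum_congr rfl fun p _ => ?_
  rw [mul_assoc, ← sum_mul_map_apply_of_uncorrelated hx L p, Finset.mul_sum]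
  exact Finset.sum_congr rfl fun i _ => by ring

theorem sum_inner_diag_map_le_of_uncorrelated {x y : ι → EuclideanSpace ℝ n}
    (hx : UncorrelatedCoords x) {α : n → ℝ} (hα : ∀ p, 0 ≤ α p)
    (hy : ∀ i p, y i p = α p * x i p) (R : EuclideanSpace ℝ n ≃ₗᵢ[ℝ] EuclideanSpace ℝ n) :
    ∑ i, inner ℝ (y i) (R (x i)) ≤ ∑ i, inner ℝ (y i) (x i) := by
  have hR := sum_inner_diag_map_eq_of_uncorrelated hx hy R.toLinearEquiv.toLinearMap
  have hid := sum_inner_diag_map_eq_of_uncorrelated hx hy LinearMap.id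
  simp only [LinearEquiv.coe_coe, LinearIsometryEquiv.coe_toLinearEquiv, LinearMap.id_apply,
    PiLp.single_apply, if_pos, mul_one] at hR hid
  rw [hR, hid]
  refine Finset.sum_le_sum fun p _ => mul_le_of_le_one_right
    (mul_nonneg (hα p) (Finset.sum_nonneg fun i _ => sq_nonneg _)) ?_
  calc R (EuclideanSpace.single p 1) p
      = inner ℝ (EuclideanSpace.single p (1 : ℝ)) (R (EuclideanSpace.single p 1)) := by
        simp [EuclideanSpace.inner_single_left]
    _ ≤ ‖EuclideanSpace.single p (1 : ℝ)‖ * ‖R (EuclideanSpace.single p 1)‖ :=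
        real_inner_le_norm _ _
    _ = 1 := by simp [R.norm_map]

end Uncorrelated

section Grid

variable {κ β : Type*} [Fintype κ] [DecidableEq κ] [Fintype β]

theorem card_mul_sum_mul_apply_eq {p q : κ} (hpq : p ≠ q) (f g : β → ℝ) :
    (Fintype.card (κ → β) : ℝ) * ∑ i : κ → β, f (i p) * g (i q) =
      (∑ i : κ → β, f (i p)) * ∑ i : κ → β, g (i q) := by
  let e := Equiv.funSplitAt q β
  have hsplit : ∀ F : (κ → β) → ℝ, ∑ i, F i = ∑ b, ∑ j, F (e.symm (b, j)) := fun F => by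
    rw [← Fintype.sum_prod_type', e.symm.sum_comp]
  have hp : ∀ b j, e.symm (b, j) p = j ⟨p, hpq⟩ := fun b j => by simp [e, hpq]
  have hq : ∀ b j, e.symm (b, j) q = b := fun b j => by simp [e]
  rw [hsplit, hsplit (fun i => f (i p)), hsplit (fun i => g (i q)), Fintype.card_congr e,
    Fintype.card_prod]
  simp only [hp, hq, Finset.sum_const, Finset.card_univ, nsmul_eq_mul, ← Finset.sum_mul,
    ← Finset.mul_sum]
  push_cast
  ring

theorem uncorrelatedCoords_of_apply_eq {x : (κ → β) → EuclideanSpace ℝ κ} (hx : ∑ i, x i = 0)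
    {f : κ → β → ℝ} (hf : ∀ i p, x i p = f p (i p)) : UncorrelatedCoords x := by
  intro p q hpq
  have hsum : ∀ p, ∑ i : κ → β, f p (i p) = 0 := fun p => by
    simpa [hf, WithLp.ofLp_sum, Finset.sum_apply] using
      congr_arg (fun z : EuclideanSpace ℝ κ => z p) hx
  have h := card_mul_sum_mul_apply_eq hpq (f p) (f q)
  rw [hsum, zero_mul, mul_eq_zero, Nat.cast_eq_zero, Fintype.card_eq_zero_iff] at h
  simp only [hf]
  rcases h with h | h
  · simp
  · exact h

end Grid

theorem procrustes_grid_identity_optimal_general (k m : ℕ)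
    (α : Fin k → ℝ) (hα : ∀ q, 0 ≤ α q)
    (u v : (Fin k → Fin m) → EuclideanSpace ℝ (Fin k))
    (hu : ∀ i, u i = fun q => ((i q : ℕ) : ℝ) + 1)
    (hv : ∀ i, v i = fun q => α q * (((i q : ℕ) : ℝ) + 1))
    (ubar vbar : EuclideanSpace ℝ (Fin k))
    (hubar : ubar = ((Fintype.card (Fin k → Fin m) : ℝ))⁻¹ • ∑ i, u i)
    (hvbar : vbar = ((Fintype.card (Fin k → Fin m) : ℝ))⁻¹ • ∑ i, v i)
    (R : EuclideanSpace ℝ (Fin k) ≃ₗᵢ[ℝ] EuclideanSpace ℝ (Fin k))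
    (t : EuclideanSpace ℝ (Fin k)) :
    ∑ i, ‖v i - (vbar - ubar) - u i‖ ^ 2 ≤ ∑ i, ‖v i - t - R (u i)‖ ^ 2 := by
  have hu'0 : ∑ i, (u i - ubar) = 0 := hubar ▸ sum_sub_inv_card_smul_sum u
  have hv'0 : ∑ i, (v i - vbar) = 0 := hvbar ▸ sum_sub_inv_card_smul_sum v
  set u' := fun i => u i - ubar
  set v' := fun i => v i - vbar
  have hv'u' : ∀ i p, v' i p = α p * u' i p := by
    intro i p
    simp only [u', v', hubar, hvbar]
    exact sub_smul_sum_apply_eq_mul (fun i p => by rw [hu, hv]) _ i p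
  have hu'unc : UncorrelatedCoords u' :=
    uncorrelatedCoords_of_apply_eq hu'0 (f := fun p j => ((j : ℕ) : ℝ) + 1 - ubar p)
      (fun i p => by simp [u', hu])
  have hres0 : ∑ i, (v' i - R (u' i)) = 0 := by
    rw [Finset.sum_sub_distrib, ← map_sum, hu'0, hv'0, map_zero, sub_zero]
  calc ∑ i, ‖v i - (vbar - ubar) - u i‖ ^ 2 = ∑ i, ‖v' i - u' i‖ ^ 2 := by
        congr! 3 with i; simp only [u', v']; abel
    _ ≤ ∑ i, ‖v' i - R (u' i)‖ ^ 2 := sum_norm_sub_sq_le_of_sum_inner_le R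
        (sum_inner_diag_map_le_of_uncorrelated hu'unc hα hv'u' R)
    _ ≤ ∑ i, ‖v' i - R (u' i) + (vbar - R ubar - t)‖ ^ 2 :=
        sum_norm_sq_le_sum_norm_add_sq hres0 _
    _ = ∑ i, ‖v i - t - R (u i)‖ ^ 2 := by
        congr! 3 with i; simp only [u', v', map_sub]; abel

/-- For grid points `u_i = (i₁,…,i_k)` (multi-indices `i ∈ {1,…,m}^k`) and
axis-rescaled points `v_i = (α₁i₁,…,α_k i_k)` with `α_q ≥ 0`, the best rigid alignment
`u ↦ t + R(u)` of `(u_i)` to `(v_i)` is achieved by the identity rotation together with the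
translation `v̄ − ū`:
`Σ_i ‖v_i − (v̄ − ū) − u_i‖² ≤ Σ_i ‖v_i − t − R(u_i)‖²` for every orthogonal `R` and `t`. -/
theorem procrustes_grid_identity_optimal (k m : ℕ) (hk : 0 < k) (hm : 0 < m)
    (α : Fin k → ℝ) (hα : ∀ q, 0 ≤ α q)
    (u v : (Fin k → Fin m) → EuclideanSpace ℝ (Fin k))
    (hu : ∀ i, u i = fun q => ((i q : ℕ) : ℝ) + 1)
    (hv : ∀ i, v i = fun q => α q * (((i q : ℕ) : ℝ) + 1))
    (ubar vbar : EuclideanSpace ℝ (Fin k))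
    (hubar : ubar = ((Fintype.card (Fin k → Fin m) : ℝ))⁻¹ • ∑ i, u i)
    (hvbar : vbar = ((Fintype.card (Fin k → Fin m) : ℝ))⁻¹ • ∑ i, v i)
    (R : EuclideanSpace ℝ (Fin k) ≃ₗᵢ[ℝ] EuclideanSpace ℝ (Fin k))
    (t : EuclideanSpace ℝ (Fin k)) :
    ∑ i, ‖v i - (vbar - ubar) - u i‖ ^ 2 ≤ ∑ i, ‖v i - t - R (u i)‖ ^ 2 :=
  procrustes_grid_identity_optimal_general k m α hα u v hu hv ubar vbar hubar hvbar R t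
end
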